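/- arXiv:2501.12013 — 4 statements merged into one kernel-verified Lean document; each statement's English description precedes it below -/
import Mathlib

section
/- Let H: ℝⁿ × ℝⁿ → ℝ be continuous and satisfy |p|²/2 - K₀ ≤ H(y,p) ≤ |p|²/2 + K₀ for all (y,p) and some K₀ > 0. Let h: ℝⁿ → ℝ satisfy ‖h‖_∞ < 1, and define L(y,q,l) := sup_{p∈ℝⁿ} (p·q - H(y,p) - h(y)·l·|p|). Then for all y ∈ ℝⁿ, v ∈ ℝⁿ and l ≥ 0 with l ≤ |v|, one has L(y,-v,-l) ≥ (|v| + h(y)·l)²/2 - K₀. -/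
/-!
Test the supremum defining `L` at the point `p = c • (-v / |v|)` with `c = |v| + h(y) l`:
the upper bound on `H` gives `L(y,-v,-l) ≥ c |v| + h(y) l c - c²/2 - K₀ = c²/2 - K₀`.
This needs `c ≥ 0`, which is where `|h| < 1` and `l ≤ |v|` enter.
-/

open RealInnerProductSpace

theorem sq_div_two_sub_le_of_isLUB {E : Type*} [NormedAddCommGroup E] [InnerProductSpace ℝ E]
    {H : E → ℝ} {K a L : ℝ} {q : E} (hH : ∀ p, H p ≤ ‖p‖ ^ 2 / 2 + K) (ha : |a| ≤ ‖q‖)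
    (hL : IsLUB (Set.range fun p => ⟪p, q⟫ - H p - a * ‖p‖) L) :
    (‖q‖ - a) ^ 2 / 2 - K ≤ L := by
  set t := ‖q‖ - a
  have ht : 0 ≤ t := by linarith [le_abs_self a]
  set p : E := (t / ‖q‖) • q
  have hp_norm : ‖p‖ = t := by
    rcases eq_or_ne q 0 with rfl | hq
    · simp only [norm_zero, abs_nonpos_iff] at ha
      simp [p, t, ha]
    · rw [norm_smul, Real.norm_of_nonneg (div_nonneg ht (norm_nonneg q)),
        div_mul_cancel₀ t (norm_ne_zero_iff.mpr hq)]
  have hp_inner : ⟪p, q⟫ = t * ‖q‖ := by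
    rw [real_inner_smul_left, real_inner_self_eq_norm_sq]
    rcases eq_or_ne ‖q‖ 0 with hq | hq
    · simp [hq]
    · field_simp
  calc (‖q‖ - a) ^ 2 / 2 - K ≤ ⟪p, q⟫ - H p - a * ‖p‖ := by
        rw [hp_inner, hp_norm]
        nlinarith [hH p, hp_norm]
    _ ≤ L := hL.1 ⟨p, rfl⟩

theorem stmt0_general (n : ℕ)
    (H : EuclideanSpace ℝ (Fin n) → EuclideanSpace ℝ (Fin n) → ℝ)
    (h : EuclideanSpace ℝ (Fin n) → ℝ)
    (L : EuclideanSpace ℝ (Fin n) → EuclideanSpace ℝ (Fin n) → ℝ → ℝ)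
    (K₀ : ℝ)
    (hH : ∀ y p, ‖p‖ ^ 2 / 2 - K₀ ≤ H y p ∧ H y p ≤ ‖p‖ ^ 2 / 2 + K₀)
    (M : ℝ) (hM : M < 1) (hhM : ∀ y, |h y| ≤ M)
    (hL : ∀ y q l, IsLUB
      (Set.range fun p => (inner ℝ p q : ℝ) - H y p - h y * l * ‖p‖) (L y q l)) :
    ∀ y v (l : ℝ), 0 ≤ l → l ≤ ‖v‖ →
      (‖v‖ + h y * l) ^ 2 / 2 - K₀ ≤ L y (-v) (-l) := by
  intro y v l hl hlv
  have ha : |h y * -l| ≤ ‖-v‖ := by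
    rw [abs_mul, abs_neg, abs_of_nonneg hl, norm_neg]
    exact (mul_le_of_le_one_left hl (by linarith [hhM y])).trans hlv
  simpa only [norm_neg, mul_neg, sub_neg_eq_add] using
    sq_div_two_sub_le_of_isLUB (fun p => (hH y p).2) ha (hL y (-v) (-l))

/-- Lower bound on the modified contact-angle Lagrangian:
`L(y,-v,-l) ≥ (|v| + h(y)l)²/2 - K₀` when `0 ≤ l ≤ |v|`, for a Hamiltonian
pinched between `|p|²/2 ± K₀` and `‖h‖_∞ < 1`. -/
theorem stmt0 (n : ℕ)
    (H : EuclideanSpace ℝ (Fin n) → EuclideanSpace ℝ (Fin n) → ℝ)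
    (h : EuclideanSpace ℝ (Fin n) → ℝ)
    (L : EuclideanSpace ℝ (Fin n) → EuclideanSpace ℝ (Fin n) → ℝ → ℝ)
    (K₀ : ℝ) (hK₀ : 0 < K₀)
    (hHc : Continuous fun yp : EuclideanSpace ℝ (Fin n) × EuclideanSpace ℝ (Fin n) =>
      H yp.1 yp.2)
    (hH : ∀ y p, ‖p‖ ^ 2 / 2 - K₀ ≤ H y p ∧ H y p ≤ ‖p‖ ^ 2 / 2 + K₀)
    (M : ℝ) (hM : M < 1) (hhM : ∀ y, |h y| ≤ M)
    (hL : ∀ y q l, IsLUB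
      (Set.range fun p => (inner ℝ p q : ℝ) - H y p - h y * l * ‖p‖) (L y q l)) :
    ∀ y v (l : ℝ), 0 ≤ l → l ≤ ‖v‖ →
      (‖v‖ + h y * l) ^ 2 / 2 - K₀ ≤ L y (-v) (-l) :=
  stmt0_general n H h L K₀ hH M hM hhM hL
end

section
/- Let H: ℝⁿ × ℝⁿ → ℝ be continuous with sup_{(x,p) ∈ K × B̄_R̄(0)} |H(x,p)| < ∞ for every compact K and every R̄, let h: ℝⁿ → ℝ be bounded with ‖h‖_∞ < 1, and define L(x,-v,-l) := sup_{p∈ℝⁿ} (-p·v - H(x,p) + h(x)·l·|p|). Fix R > 0 and choose R̄ > R so that τ := ‖h‖_∞ (R̄+R)/(R̄-R) < 1. Then there exists a constant C > 0 (depending only on R, R̄ and sup over the ball of radius R̄ of |H|) such that whenever (x,p,v,l) ∈ ℝⁿ × B_R(0) × ℝⁿ × (0,∞) satisfies H(x,p) + L(x,-v,-l) ≤ 1 - v·p + h(x)·l·|p|, one has |v| ≤ C + τ·l. -/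
/-!
Test the supremum defining `L(x, -v, -l)` at the point `p'` of norm `R̄` pointing along `-v`:
this gives `L ≥ R̄ |v| - C₁ - ‖h‖_∞ l R̄`, while the hypothesis bounds `L` from above by
`1 + C₁ + R |v| + ‖h‖_∞ l R`. Hence `(R̄ - R) |v| ≤ 1 + 2 C₁ + ‖h‖_∞ l (R̄ + R)`, and dividing
by `R̄ - R` produces exactly the coefficient `τ` in front of `l`.
-/

open Set

section InnerProductSpace

variable {E : Type*} [NormedAddCommGroup E] [InnerProductSpace ℝ E]

lemma exists_norm_eq_and_inner_eq_mul_norm {v : E} (hv : v ≠ 0) {r : ℝ} (hr : 0 ≤ r) :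
    ∃ p : E, ‖p‖ = r ∧ (inner ℝ p v : ℝ) = r * ‖v‖ := by
  have hnv : 0 < ‖v‖ := norm_pos_iff.2 hv
  refine ⟨(r / ‖v‖) • v, ?_, ?_⟩
  · rw [norm_smul, Real.norm_of_nonneg (by positivity), div_mul_cancel₀ _ hnv.ne']
  · rw [real_inner_smul_left, real_inner_self_eq_norm_sq]
    field_simp

lemma mul_norm_sub_le_of_isLUB {H : E → ℝ} {q : E} {c K r C₁ Lq : ℝ} (hq : q ≠ 0) (hr : 0 ≤ r)
    (hH : ∀ p, ‖p‖ ≤ r → |H p| ≤ C₁) (hc : |c| ≤ K)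
    (hL : IsLUB (range fun p => (inner ℝ p q : ℝ) - H p - c * ‖p‖) Lq) :
    r * ‖q‖ - C₁ - K * r ≤ Lq := by
  obtain ⟨p, hp, hpq⟩ := exists_norm_eq_and_inner_eq_mul_norm hq hr
  have hLp : (inner ℝ p q : ℝ) - H p - c * ‖p‖ ≤ Lq := hL.1 ⟨p, rfl⟩
  have hHp : H p ≤ C₁ := (abs_le.1 (hH p hp.le)).2
  have hcp : c * ‖p‖ ≤ K * r := by
    rw [hp]
    exact mul_le_mul_of_nonneg_right ((le_abs_self c).trans hc) hr
  linarith

lemma sub_mul_norm_le_of_hamiltonian_add_lagrangian_le {H : E → ℝ} {p v : E}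
    {a l R Rbar C₁ Lv : ℝ} (hl : 0 ≤ l) (hp : ‖p‖ ≤ R) (hRR : R ≤ Rbar)
    (hH : ∀ p, ‖p‖ ≤ Rbar → |H p| ≤ C₁)
    (hL : IsLUB (range fun p' => (inner ℝ p' (-v) : ℝ) - H p' - a * -l * ‖p'‖) Lv)
    (hineq : H p + Lv ≤ 1 - (inner ℝ v p : ℝ) + a * l * ‖p‖) :
    (Rbar - R) * ‖v‖ ≤ 1 + 2 * C₁ + |a| * l * (Rbar + R) := by
  have hR : 0 ≤ R := (norm_nonneg p).trans hp
  have hRbar : 0 ≤ Rbar := hR.trans hRR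
  have hC₁ : 0 ≤ C₁ := (abs_nonneg _).trans (hH 0 (by simpa using hRbar))
  rcases eq_or_ne v 0 with rfl | hv
  · simp only [norm_zero, mul_zero]
    positivity
  have hLv : Rbar * ‖v‖ - C₁ - |a| * l * Rbar ≤ Lv := by
    have hc : |a * -l| ≤ |a| * l := by rw [abs_mul, abs_neg, abs_of_nonneg hl]
    simpa using mul_norm_sub_le_of_isLUB (neg_ne_zero.2 hv) hRbar hH hc hL
  have hHp : -C₁ ≤ H p := (abs_le.1 (hH p (hp.trans hRR))).1
  have hvp : -(‖v‖ * R) ≤ (inner ℝ v p : ℝ) := by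
    have := neg_le_of_abs_le (abs_real_inner_le_norm v p)
    linarith [mul_le_mul_of_nonneg_left hp (norm_nonneg v)]
  have hap : a * l * ‖p‖ ≤ |a| * l * R :=
    mul_le_mul (mul_le_mul_of_nonneg_right (le_abs_self a) hl) hp (norm_nonneg p) (by positivity)
  linarith

end InnerProductSpace

theorem stmt3_general (n : ℕ)
    (H : EuclideanSpace ℝ (Fin n) → EuclideanSpace ℝ (Fin n) → ℝ)
    (h : EuclideanSpace ℝ (Fin n) → ℝ)
    (L : EuclideanSpace ℝ (Fin n) → EuclideanSpace ℝ (Fin n) → ℝ → ℝ)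
    (M : ℝ) (hhM : ∀ x, |h x| ≤ M)
    (R Rbar : ℝ) (hR : 0 < R) (hRR : R < Rbar)
    (τ : ℝ) (hτ : τ = M * (Rbar + R) / (Rbar - R))
    (C₁ : ℝ) (hC₁ : ∀ x p, ‖p‖ ≤ Rbar → |H x p| ≤ C₁)
    (hL : ∀ x q l, IsLUB
      (Set.range fun p => (inner ℝ p q : ℝ) - H x p - h x * l * ‖p‖) (L x q l)) :
    ∃ C > 0, ∀ x p v (l : ℝ), ‖p‖ < R → 0 < l →
      H x p + L x (-v) (-l) ≤ 1 - (inner ℝ v p : ℝ) + h x * l * ‖p‖ →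
      ‖v‖ ≤ C + τ * l := by
  have hRbar : 0 < Rbar := hR.trans hRR
  have hden : 0 < Rbar - R := sub_pos.2 hRR
  have hC₁0 : 0 ≤ C₁ := (abs_nonneg _).trans (hC₁ 0 0 (by simp [hRbar.le]))
  refine ⟨(1 + 2 * C₁) / (Rbar - R), by positivity, fun x p v l hp hl hineq => ?_⟩
  have key := sub_mul_norm_le_of_hamiltonian_add_lagrangian_le (H := H x) hl.le hp.le hRR.le
    (hC₁ x) (hL x (-v) (-l)) hineq
  have hM : |h x| * l * (Rbar + R) ≤ M * l * (Rbar + R) := by gcongr; exact hhM x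
  rw [hτ, div_mul_eq_mul_div, ← add_div, le_div_iff₀ hden]
  linarith

/-- A priori bound on the velocity control in terms of the reflection intensity:
if `H(x,p) + L(x,-v,-l) ≤ 1 - v·p + h(x) l |p|` with `|p| < R`, then `|v| ≤ C + τ l`
where `τ = ‖h‖_∞ (R̄+R)/(R̄-R) < 1`. -/
theorem stmt3 (n : ℕ)
    (H : EuclideanSpace ℝ (Fin n) → EuclideanSpace ℝ (Fin n) → ℝ)
    (h : EuclideanSpace ℝ (Fin n) → ℝ)
    (L : EuclideanSpace ℝ (Fin n) → EuclideanSpace ℝ (Fin n) → ℝ → ℝ)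
    (hHc : Continuous fun yp : EuclideanSpace ℝ (Fin n) × EuclideanSpace ℝ (Fin n) =>
      H yp.1 yp.2)
    (M : ℝ) (hM0 : 0 ≤ M) (hM1 : M < 1) (hhM : ∀ x, |h x| ≤ M)
    (R Rbar : ℝ) (hR : 0 < R) (hRR : R < Rbar)
    (τ : ℝ) (hτ : τ = M * (Rbar + R) / (Rbar - R)) (hτ1 : τ < 1)
    (C₁ : ℝ) (hC₁ : ∀ x p, ‖p‖ ≤ Rbar → |H x p| ≤ C₁)
    (hL : ∀ x q l, IsLUB
      (Set.range fun p => (inner ℝ p q : ℝ) - H x p - h x * l * ‖p‖) (L x q l)) :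
    ∃ C > 0, ∀ x p v (l : ℝ), ‖p‖ < R → 0 < l →
      H x p + L x (-v) (-l) ≤ 1 - (inner ℝ v p : ℝ) + h x * l * ‖p‖ →
      ‖v‖ ≤ C + τ * l :=
  stmt3_general n H h L M hhM R Rbar hR hRR τ hτ C₁ hC₁ hL
end

section
/- Let Ω ⊂ ℝⁿ be an open set with C¹ boundary, with outward unit normal ν, and let γ: ∂Ω → ℝⁿ be a continuous bounded vector field with γ(y)·ν(y) ≥ ρ > 0 for all y ∈ ∂Ω. Suppose η: [0,∞) → closure(Ω) is absolutely continuous, l ∈ L¹_loc([0,∞),[0,∞)), v ∈ L¹_loc([0,∞),ℝⁿ), with η̇(s) + l(s)γ(η(s)) = v(s) a.e., l(s) = 0 whenever η(s) ∈ Ω, and η(s) ∈ closure(Ω) for all s. Then for a.e. s: l(s) ≤ |v(s)|/ρ and |η̇(s)| ≤ (1 + ‖γ‖_∞/ρ)|v(s)|. In particular, when γ = ν (so ρ = 1), l(s) ≤ |v(s)|. -/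
/-!
The points of a level set of `f : ℝ → F` that are isolated on the right within it are countable,
and at every other point of the level set where `f` is differentiable its derivative vanishes.
Applied to `ψ ∘ η` on `{ψ = 0} = ∂Ω`, this gives `⟪∇ψ(η s), η̇ s⟫ = 0`, i.e. `η̇ s ⊥ ν(η s)`,
for a.e. `s` with `η s ∈ ∂Ω`. Pairing `η̇ + l γ(η) = v` with `ν` then gives
`l ρ ≤ l ⟪γ, ν⟫ = ⟪ν, v⟫ ≤ ‖v‖`, and `‖η̇‖ ≤ ‖v‖ + l ‖γ‖` gives the speed bound.
-/

open MeasureTheory Filter Set Topology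

variable {F : Type*} [NormedAddCommGroup F] [NormedSpace ℝ F]

theorem HasDerivAt.eq_zero_of_neBot_levelSet_right {f : ℝ → F} {f' : F} {x : ℝ}
    (hf : HasDerivAt f f' x) (hx : (𝓝[f ⁻¹' {f x} ∩ Ioi x] x).NeBot) : f' = 0 := by
  have hslope : Tendsto (slope f x) (𝓝[f ⁻¹' {f x} ∩ Ioi x] x) (𝓝 f') :=
    (hasDerivAt_iff_tendsto_slope.mp hf).mono_left
      (nhdsWithin_mono _ fun t ht => ne_of_gt ht.2)
  refine tendsto_nhds_unique hslope (tendsto_const_nhds.congr' ?_)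
  filter_upwards [self_mem_nhdsWithin] with t ht
  rw [slope_def_module, show f t = f x from ht.1, sub_self, smul_zero]

theorem ae_hasDerivAt_eq_zero_of_mem_levelSet (f f' : ℝ → F) (c : F) :
    ∀ᵐ x, f x = c → HasDerivAt f (f' x) x → f' x = 0 := by
  filter_upwards [(countable_setOfPred_isolated_right_within (s := f ⁻¹' {c})).ae_notMem volume]
    with x hx hfx hf
  subst hfx
  exact hf.eq_zero_of_neBot_levelSet_right ⟨fun hbot => hx ⟨rfl, hbot⟩⟩

variable {E : Type*} [NormedAddCommGroup E] [InnerProductSpace ℝ E]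

open RealInnerProductSpace in
theorem le_norm_div_of_add_smul_eq {ν γ d v : E} {l ρ : ℝ} (hρ : 0 < ρ) (hν : ‖ν‖ ≤ 1)
    (hγν : ρ ≤ ⟪γ, ν⟫) (hd : ⟪ν, d⟫ = 0) (heq : d + l • γ = v) : l ≤ ‖v‖ / ρ := by
  rcases lt_or_ge l 0 with hl | hl
  · exact hl.le.trans (by positivity)
  have hνv : ⟪ν, v⟫ = l * ⟪γ, ν⟫ := by
    rw [← heq, inner_add_right, hd, real_inner_smul_right, real_inner_comm, zero_add]
  rw [le_div_iff₀ hρ]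
  calc l * ρ ≤ l * ⟪γ, ν⟫ := mul_le_mul_of_nonneg_left hγν hl
    _ = ⟪ν, v⟫ := hνv.symm
    _ ≤ ‖ν‖ * ‖v‖ := real_inner_le_norm ν v
    _ ≤ ‖v‖ := mul_le_of_le_one_left (norm_nonneg v) hν

theorem norm_le_of_add_smul_eq {d γ v : F} {l C ρ : ℝ} (hl : 0 ≤ l) (hγ : ‖γ‖ ≤ C)
    (hlv : l ≤ ‖v‖ / ρ) (heq : d + l • γ = v) : ‖d‖ ≤ (1 + C / ρ) * ‖v‖ := by
  have hC : 0 ≤ C := (norm_nonneg γ).trans hγ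
  calc ‖d‖ = ‖v - l • γ‖ := by rw [← heq, add_sub_cancel_right]
    _ ≤ ‖v‖ + l * ‖γ‖ := (norm_sub_le _ _).trans_eq (by rw [norm_smul_of_nonneg hl])
    _ ≤ ‖v‖ + l * C := by gcongr
    _ ≤ ‖v‖ + ‖v‖ / ρ * C := by gcongr
    _ = (1 + C / ρ) * ‖v‖ := by ring

theorem stmt5_general (n : ℕ)
    (Ω : Set (EuclideanSpace ℝ (Fin n)))
    (ψ : EuclideanSpace ℝ (Fin n) → ℝ) (hψ : ContDiff ℝ 1 ψ)
    (hfr : frontier Ω = {x | ψ x = 0})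
    (ν γ : EuclideanSpace ℝ (Fin n) → EuclideanSpace ℝ (Fin n))
    (hν1 : ∀ y ∈ frontier Ω, ‖ν y‖ = 1)
    (hψν : ∀ y ∈ frontier Ω, gradient ψ y = ‖gradient ψ y‖ • ν y)
    (hψ0 : ∀ y ∈ frontier Ω, gradient ψ y ≠ 0)
    (Cγ : ℝ) (hγb : ∀ y, ‖γ y‖ ≤ Cγ)
    (ρ : ℝ) (hρ : 0 < ρ) (hγν : ∀ y ∈ frontier Ω, ρ ≤ (inner ℝ (γ y) (ν y) : ℝ))
    (η η' v : ℝ → EuclideanSpace ℝ (Fin n)) (l : ℝ → ℝ)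
    (hηd : ∀ᵐ s ∂(volume.restrict (Set.Ioi (0:ℝ))), HasDerivAt η (η' s) s)
    (heq : ∀ᵐ s ∂(volume.restrict (Set.Ioi (0:ℝ))), η' s + l s • γ (η s) = v s)
    (hl0 : ∀ᵐ s ∂(volume.restrict (Set.Ioi (0:ℝ))), 0 ≤ l s)
    (hlΩ : ∀ᵐ s ∂(volume.restrict (Set.Ioi (0:ℝ))), η s ∈ Ω → l s = 0)
    (hmem : ∀ s : ℝ, 0 ≤ s → η s ∈ closure Ω) :
    ∀ᵐ s ∂(volume.restrict (Set.Ioi (0:ℝ))),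
      l s ≤ ‖v s‖ / ρ ∧ ‖η' s‖ ≤ (1 + Cγ / ρ) * ‖v s‖ := by
  have hψη : ∀ᵐ s ∂(volume.restrict (Set.Ioi (0:ℝ))), ψ (η s) = 0 →
      HasDerivAt (ψ ∘ η) (inner ℝ (gradient ψ (η s)) (η' s)) s →
      inner ℝ (gradient ψ (η s)) (η' s) = (0 : ℝ) :=
    ae_restrict_of_ae (ae_hasDerivAt_eq_zero_of_mem_levelSet _ _ 0)
  filter_upwards [hηd, heq, hl0, hlΩ, hψη, ae_restrict_mem measurableSet_Ioi]
    with s hηs heqs hl0s hlΩs hψηs hs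
  have hls : l s ≤ ‖v s‖ / ρ := by
    rcases (closure_eq_self_union_frontier Ω ▸ hmem s (le_of_lt hs)) with hin | hbd
    · rw [hlΩs hin]; positivity
    · have hderiv := ((hψ.differentiable one_ne_zero) (η s)).hasGradientAt.hasFDerivAt
        |>.comp_hasDerivAt s hηs
      simp only [InnerProductSpace.toDual_apply_apply] at hderiv
      have hgrad_tangent := hψηs (by rwa [hfr] at hbd) hderiv
      rw [hψν _ hbd, real_inner_smul_left] at hgrad_tangent
      have hν_tangent : inner ℝ (ν (η s)) (η' s) = (0 : ℝ) :=
        (mul_eq_zero.mp hgrad_tangent).resolve_left (norm_ne_zero_iff.mpr (hψ0 _ hbd))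
      exact le_norm_div_of_add_smul_eq hρ (hν1 _ hbd).le (hγν _ hbd) hν_tangent heqs
  exact ⟨hls, norm_le_of_add_smul_eq hl0s (hγb _) hls heqs⟩

/-- Basic estimates for solutions of the Skorokhod problem: the reflection
intensity `l` and the trajectory speed `|η̇|` are controlled by the control speed
`|v|`: `l(s) ≤ |v(s)|/ρ` and `|η̇(s)| ≤ (1 + ‖γ‖_∞/ρ)|v(s)|` a.e. -/
theorem stmt5 (n : ℕ)
    (Ω : Set (EuclideanSpace ℝ (Fin n))) (hΩ : IsOpen Ω)
    (ψ : EuclideanSpace ℝ (Fin n) → ℝ) (hψ : ContDiff ℝ 1 ψ)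
    (hΩψ : Ω = {x | ψ x < 0}) (hfr : frontier Ω = {x | ψ x = 0})
    (ν γ : EuclideanSpace ℝ (Fin n) → EuclideanSpace ℝ (Fin n))
    (hν1 : ∀ y ∈ frontier Ω, ‖ν y‖ = 1)
    (hψν : ∀ y ∈ frontier Ω, gradient ψ y = ‖gradient ψ y‖ • ν y)
    (hψ0 : ∀ y ∈ frontier Ω, gradient ψ y ≠ 0)
    (hγc : Continuous γ) (Cγ : ℝ) (hγb : ∀ y, ‖γ y‖ ≤ Cγ)
    (ρ : ℝ) (hρ : 0 < ρ) (hγν : ∀ y ∈ frontier Ω, ρ ≤ (inner ℝ (γ y) (ν y) : ℝ))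
    (η η' v : ℝ → EuclideanSpace ℝ (Fin n)) (l : ℝ → ℝ)
    (hl : LocallyIntegrableOn l (Set.Ici 0))
    (hv : LocallyIntegrableOn v (Set.Ici 0))
    (hηd : ∀ᵐ s ∂(volume.restrict (Set.Ioi (0:ℝ))), HasDerivAt η (η' s) s)
    (heq : ∀ᵐ s ∂(volume.restrict (Set.Ioi (0:ℝ))), η' s + l s • γ (η s) = v s)
    (hl0 : ∀ᵐ s ∂(volume.restrict (Set.Ioi (0:ℝ))), 0 ≤ l s)
    (hlΩ : ∀ᵐ s ∂(volume.restrict (Set.Ioi (0:ℝ))), η s ∈ Ω → l s = 0)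
    (hmem : ∀ s : ℝ, 0 ≤ s → η s ∈ closure Ω) :
    ∀ᵐ s ∂(volume.restrict (Set.Ioi (0:ℝ))),
      l s ≤ ‖v s‖ / ρ ∧ ‖η' s‖ ≤ (1 + Cγ / ρ) * ‖v s‖ :=
  stmt5_general n Ω ψ hψ hfr ν γ hν1 hψν hψ0 Cγ hγb ρ hρ hγν η η' v l hηd heq hl0 hlΩ hmem
end

section
/- Let m*: [1,∞) × ℝⁿ × ℝⁿ → ℝ satisfy: (i) m*(2t, 0, 2y) ≤ 2 m*(t, 0, y) + C and (ii) 2 m*(t, 0, y) ≤ m*(2t, 0, 2y) + C for all t ≥ 1 and |y| ≤ M₀ t, for some constants C, M₀ > 0. Suppose further that for each (t,y) with |y| ≤ M₀ t the limit m̄(t,y) := lim_{k→∞} m*(k t, k·0, k y)/k exists and m̄ is positively 1-homogeneous: m̄(λt, λy) = λ m̄(t,y) for λ > 0. Then for every ε ∈ (0,1], t ≥ ε, and |y| ≤ M₀ t, one has |m̄(t,y) − ε m*(t/ε, 0, y/ε)| ≤ C ε. -/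
/-!
Iterating the approximate additivity `|m*(2s, 0, 2z) - 2 m*(s, 0, z)| ≤ C` along the doubling
sequence gives `|m*(2ʲt, 0, 2ʲy) / 2ʲ - m*(t, 0, y)| ≤ (1 - 2⁻ʲ) C`, and letting `j → ∞` along
this subsequence of the defining limit yields `|m̄(t, y) - m*(t, 0, y)| ≤ C` for `t ≥ 1`.
Homogeneity of `m̄` rescales this to `|m̄(t, y) - ε m*(t/ε, 0, y/ε)| ≤ C ε`.
-/

open Filter Topology

theorem abs_sub_two_pow_mul_le {f : ℕ → ℝ} {C : ℝ} (hf : ∀ j, |f (j + 1) - 2 * f j| ≤ C)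
    (j : ℕ) : |f j - 2 ^ j * f 0| ≤ (2 ^ j - 1) * C := by
  induction j with
  | zero => simp
  | succ j ih =>
    calc |f (j + 1) - 2 ^ (j + 1) * f 0|
        = |(f (j + 1) - 2 * f j) + 2 * (f j - 2 ^ j * f 0)| := by ring_nf
      _ ≤ |f (j + 1) - 2 * f j| + 2 * |f j - 2 ^ j * f 0| := by
          simpa [abs_mul] using abs_add_le (f (j + 1) - 2 * f j) (2 * (f j - 2 ^ j * f 0))
      _ ≤ C + 2 * ((2 ^ j - 1) * C) := by gcongr; exact hf j
      _ = (2 ^ (j + 1) - 1) * C := by ring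

theorem abs_sub_le_of_tendsto_div_two_pow {f : ℕ → ℝ} {C L : ℝ}
    (hf : ∀ j, |f (j + 1) - 2 * f j| ≤ C) (hL : Tendsto (fun j => f j / 2 ^ j) atTop (𝓝 L)) :
    |L - f 0| ≤ C := by
  have hC : 0 ≤ C := (abs_nonneg _).trans (hf 0)
  refine le_of_tendsto ((hL.sub_const (f 0)).abs) (Eventually.of_forall fun j => ?_)
  have h2j : (0 : ℝ) < 2 ^ j := by positivity
  calc |f j / 2 ^ j - f 0| = |f j - 2 ^ j * f 0| / 2 ^ j := by
        rw [← abs_of_pos h2j, ← abs_div, abs_of_pos h2j]; field_simp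
    _ ≤ (2 ^ j - 1) * C / 2 ^ j := by gcongr; exact abs_sub_two_pow_mul_le hf j
    _ ≤ C := by rw [div_le_iff₀ h2j]; nlinarith

theorem norm_smul_le_mul_mul_of_norm_le {E : Type*} [SeminormedAddCommGroup E]
    [NormedSpace ℝ E] {M t c : ℝ} {y : E} (hc : 0 ≤ c) (hy : ‖y‖ ≤ M * t) :
    ‖c • y‖ ≤ M * (c * t) := by
  rw [norm_smul, Real.norm_of_nonneg hc]
  nlinarith

theorem abs_mbar_sub_mstar_le {E : Type*} [SeminormedAddCommGroup E] [NormedSpace ℝ E]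
    {C M₀ : ℝ} {mstar : ℝ → E → E → ℝ} {mbar : ℝ → E → ℝ}
    (hsub : ∀ t (y : E), 1 ≤ t → ‖y‖ ≤ M₀ * t →
      mstar (2 * t) 0 ((2:ℝ) • y) ≤ 2 * mstar t 0 y + C)
    (hsup : ∀ t (y : E), 1 ≤ t → ‖y‖ ≤ M₀ * t →
      2 * mstar t 0 y ≤ mstar (2 * t) 0 ((2:ℝ) • y) + C)
    (hlim : ∀ t (y : E), 0 < t → ‖y‖ ≤ M₀ * t →
      Tendsto (fun k : ℕ => mstar ((k:ℝ) * t) 0 ((k:ℝ) • y) / (k:ℝ)) atTop (𝓝 (mbar t y)))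
    {t : ℝ} {y : E} (ht : 1 ≤ t) (hy : ‖y‖ ≤ M₀ * t) :
    |mbar t y - mstar t 0 y| ≤ C := by
  set f : ℕ → ℝ := fun j => mstar (2 ^ j * t) 0 ((2 : ℝ) ^ j • y) with hf_def
  have hdoubling : ∀ j, |f (j + 1) - 2 * f j| ≤ C := by
    intro j
    have hj : 1 ≤ (2 : ℝ) ^ j * t := one_le_mul_of_one_le_of_one_le (one_le_pow₀ one_le_two) ht
    have hyj := norm_smul_le_mul_mul_of_norm_le (pow_nonneg zero_le_two j) hy
    have hf_succ : f (j + 1) = mstar (2 * (2 ^ j * t)) 0 ((2 : ℝ) • (2 : ℝ) ^ j • y) := by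
      simp only [hf_def, smul_smul, pow_succ, mul_assoc, mul_comm (2 : ℝ)]
    rw [abs_le, hf_succ]
    constructor <;> linarith [hsub _ _ hj hyj, hsup _ _ hj hyj]
  have hlim_pow : Tendsto (fun j => f j / 2 ^ j) atTop (𝓝 (mbar t y)) := by
    have := (hlim t y (one_pos.trans_le ht) hy).comp
      (tendsto_pow_atTop_atTop_of_one_lt one_lt_two)
    simpa only [Function.comp_def, Nat.cast_pow, Nat.cast_ofNat] using this
  simpa [hf_def] using abs_sub_le_of_tendsto_div_two_pow hdoubling hlim_pow

theorem stmt9_general (n : ℕ) (C M₀ : ℝ)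
    (mstar : ℝ → EuclideanSpace ℝ (Fin n) → EuclideanSpace ℝ (Fin n) → ℝ)
    (mbar : ℝ → EuclideanSpace ℝ (Fin n) → ℝ)
    (hsub : ∀ t (y : EuclideanSpace ℝ (Fin n)), 1 ≤ t → ‖y‖ ≤ M₀ * t →
      mstar (2 * t) 0 ((2:ℝ) • y) ≤ 2 * mstar t 0 y + C)
    (hsup : ∀ t (y : EuclideanSpace ℝ (Fin n)), 1 ≤ t → ‖y‖ ≤ M₀ * t →
      2 * mstar t 0 y ≤ mstar (2 * t) 0 ((2:ℝ) • y) + C)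
    (hlim : ∀ t (y : EuclideanSpace ℝ (Fin n)), 0 < t → ‖y‖ ≤ M₀ * t →
      Filter.Tendsto (fun k : ℕ => mstar ((k:ℝ) * t) 0 ((k:ℝ) • y) / (k:ℝ))
        Filter.atTop (nhds (mbar t y)))
    (hhom : ∀ (lam t : ℝ) (y : EuclideanSpace ℝ (Fin n)), 0 < lam →
      mbar (lam * t) (lam • y) = lam * mbar t y) :
    ∀ (ε t : ℝ) (y : EuclideanSpace ℝ (Fin n)), 0 < ε → ε ≤ 1 → ε ≤ t →
      ‖y‖ ≤ M₀ * t →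
      |mbar t y - ε * mstar (t / ε) 0 (ε⁻¹ • y)| ≤ C * ε := by
  intro ε t y hε _ hεt hy
  have ht : 1 ≤ t / ε := (one_le_div hε).mpr hεt
  have hy' : ‖ε⁻¹ • y‖ ≤ M₀ * (t / ε) := by
    simpa only [div_eq_inv_mul] using norm_smul_le_mul_mul_of_norm_le (inv_nonneg.mpr hε.le) hy
  have hscale : mbar t y = ε * mbar (t / ε) (ε⁻¹ • y) := by
    rw [← hhom ε _ _ hε, mul_div_cancel₀ t hε.ne', smul_inv_smul₀ hε.ne']
  rw [hscale, ← mul_sub, abs_mul, abs_of_pos hε, mul_comm C]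
  exact mul_le_mul_of_nonneg_left (abs_mbar_sub_mstar_le hsub hsup hlim ht hy') hε.le

/-- Quantitative comparison between the rescaled metric function and its
homogenized limit: approximate sub/superadditivity along the doubling sequence
with error `C` plus existence and homogeneity of the limit `m̄` yield
`|m̄(t,y) − ε m*(t/ε, 0, y/ε)| ≤ C ε`. -/
theorem stmt9 (n : ℕ) (C M₀ : ℝ) (hC : 0 < C) (hM₀ : 0 < M₀)
    (mstar : ℝ → EuclideanSpace ℝ (Fin n) → EuclideanSpace ℝ (Fin n) → ℝ)
    (mbar : ℝ → EuclideanSpace ℝ (Fin n) → ℝ)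
    (hsub : ∀ t (y : EuclideanSpace ℝ (Fin n)), 1 ≤ t → ‖y‖ ≤ M₀ * t →
      mstar (2 * t) 0 ((2:ℝ) • y) ≤ 2 * mstar t 0 y + C)
    (hsup : ∀ t (y : EuclideanSpace ℝ (Fin n)), 1 ≤ t → ‖y‖ ≤ M₀ * t →
      2 * mstar t 0 y ≤ mstar (2 * t) 0 ((2:ℝ) • y) + C)
    (hlim : ∀ t (y : EuclideanSpace ℝ (Fin n)), 0 < t → ‖y‖ ≤ M₀ * t →
      Filter.Tendsto (fun k : ℕ => mstar ((k:ℝ) * t) 0 ((k:ℝ) • y) / (k:ℝ))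
        Filter.atTop (nhds (mbar t y)))
    (hhom : ∀ (lam t : ℝ) (y : EuclideanSpace ℝ (Fin n)), 0 < lam →
      mbar (lam * t) (lam • y) = lam * mbar t y) :
    ∀ (ε t : ℝ) (y : EuclideanSpace ℝ (Fin n)), 0 < ε → ε ≤ 1 → ε ≤ t →
      ‖y‖ ≤ M₀ * t →
      |mbar t y - ε * mstar (t / ε) 0 (ε⁻¹ • y)| ≤ C * ε :=
  stmt9_general n C M₀ mstar mbar hsub hsup hlim hhom
end
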